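/- With n = 25, μ = 0, σ = 12, for each integer threshold t ∈ {11, 12, 13}, the group size optimal for group members is 7: for every group size g with 1 ≤ g ≤ 25, E_G(g, t) ≤ E_G(7, t). -/
import Mathlib


/-- Standard normal probability density function. -/
noncomputable def stdPDF (x : ℝ) : ℝ := (Real.sqrt (2 * Real.pi))⁻¹ * Real.exp (-(x ^ 2) / 2)

/-- Standard normal cumulative distribution function. -/
noncomputable def stdCDF (x : ℝ) : ℝ := ∫ u in Set.Iic x, stdPDF u

/-- `Pkm p k m` = 1 if `k < -1`; `0` if `k ≥ m`; otherwise `∑_{i=k+1}^m C(m,i) p^i (1-p)^(m-i)`. -/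
noncomputable def Pkm (p : ℝ) (k : ℤ) (m : ℕ) : ℝ :=
  if k < -1 then 1
  else if (m : ℤ) ≤ k then 0
  else ∑ i ∈ Finset.range (m + 1),
    if k < (i : ℤ) then (m.choose i : ℝ) * p ^ i * (1 - p) ^ (m - i) else 0

/-- The closed-form expected capital gain of an individualist (Corollary 1):
`E_I(n,g,t,μ,σ) = (r(P_{t−g−1,ℓ−1} − P_{t−g,ℓ}) + μ P_{t−g,ℓ}) Φ(μ_g)
               + (r(P_{t−1,ℓ−1} − P_{t,ℓ}) + μ P_{t,ℓ}) Φ(−μ_g)`,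
with `ℓ = n − g`, `q = Φ(μ/σ)`, `p = 1 − q`, `r = σ φ(μ/σ)/q`, `σ_g = σ/√g`, `μ_g = μ/σ_g`. -/
noncomputable def EI (n g : ℕ) (t : ℤ) (μ σ : ℝ) : ℝ :=
  let ℓ := n - g
  let q := stdCDF (μ / σ)
  let p := 1 - q
  let r := σ * stdPDF (μ / σ) / q
  let σg := σ / Real.sqrt g
  let μg := μ / σg
  (r * (Pkm p (t - g - 1) (ℓ - 1) - Pkm p (t - g) ℓ) + μ * Pkm p (t - g) ℓ) * stdCDF μg
    + (r * (Pkm p (t - 1) (ℓ - 1) - Pkm p t ℓ) + μ * Pkm p t ℓ) * stdCDF (-μg)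

/-- The closed-form expected capital gain of a group member (Corollary 1):
`E_G(n,g,t,μ,σ) = (P_{t−g,ℓ} − P_{t,ℓ})(μ Φ(μ_g) + σ_g φ(μ_g)) + μ P_{t,ℓ}`,
with `ℓ = n − g`, `q = Φ(μ/σ)`, `p = 1 − q`, `σ_g = σ/√g`, `μ_g = μ/σ_g`. -/
noncomputable def EG (n g : ℕ) (t : ℤ) (μ σ : ℝ) : ℝ :=
  let ℓ := n - g
  let q := stdCDF (μ / σ)
  let p := 1 - q
  let σg := σ / Real.sqrt g
  let μg := μ / σg
  (Pkm p (t - g) ℓ - Pkm p t ℓ) * (μ * stdCDF μg + σg * stdPDF μg) + μ * Pkm p t ℓ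

/-- `E_I(g,t) = E_I(25, g, t, 0, 12)`: society of `n = 25` agents, neutral environment. -/
noncomputable def EI25 (g : ℕ) (t : ℤ) : ℝ := EI 25 g t 0 12

/-- `E_G(g,t) = E_G(25, g, t, 0, 12)`: society of `n = 25` agents, neutral environment. -/
noncomputable def EG25 (g : ℕ) (t : ℤ) : ℝ := EG 25 g t 0 12


section AuxProofs

lemma stdPDF_eq' (x : ℝ) : stdPDF x = (Real.sqrt (2 * Real.pi))⁻¹ * Real.exp (-(1/2) * x ^ 2) := by
  unfold stdPDF; congr 1; ring

lemma stdPDF_integrable : MeasureTheory.Integrable stdPDF := by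
  have h := integrable_exp_neg_mul_sq (b := (1/2 : ℝ)) (by norm_num)
  have heq : stdPDF = fun x => (Real.sqrt (2 * Real.pi))⁻¹ * Real.exp (-(1/2) * x ^ 2) := by
    funext x; exact stdPDF_eq' x
  rw [heq]
  exact h.const_mul _

lemma stdPDF_total : ∫ x, stdPDF x = 1 := by
  have h := integral_gaussian (1/2 : ℝ)
  simp_rw [stdPDF_eq']
  rw [MeasureTheory.integral_const_mul, h,
    show Real.pi / (1/2) = 2 * Real.pi by ring, inv_mul_cancel₀]
  positivity

lemma stdCDF_zero : stdCDF 0 = 1/2 := by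
  have hsymm : (∫ x in Set.Iic (0:ℝ), stdPDF x) = ∫ x in Set.Ioi (0:ℝ), stdPDF x := by
    rw [show ∫ x in Set.Iic (0:ℝ), stdPDF x = ∫ x in Set.Iic (0:ℝ), stdPDF (-x) from by
      congr 1; funext x; unfold stdPDF; congr 2; ring]
    rw [integral_comp_neg_Iic, neg_zero]
  have htot : (∫ x in Set.Iic (0:ℝ), stdPDF x) + ∫ x in Set.Ioi (0:ℝ), stdPDF x = 1 := by
    rw [intervalIntegral.integral_Iic_add_Ioi (stdPDF_integrable.integrableOn)
      (stdPDF_integrable.integrableOn)]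
    exact stdPDF_total
  have h2 : (2:ℝ) * stdCDF 0 = 1 := by
    unfold stdCDF
    rw [two_mul]
    nth_rewrite 2 [hsymm]
    exact htot
  linarith

lemma stdPDF_zero : stdPDF 0 = (Real.sqrt (2 * Real.pi))⁻¹ := by
  simp [stdPDF]

lemma EG25_eq (g : ℕ) (t : ℤ) :
    EG25 g t = (Pkm (1/2) (t - g) (25 - g) - Pkm (1/2) t (25 - g)) *
      (12 / Real.sqrt g * (Real.sqrt (2 * Real.pi))⁻¹) := by
  unfold EG25 EG
  norm_num [stdCDF_zero, stdPDF_zero]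

lemma key (g : ℕ) (a b : ℝ) (ha : 0 ≤ a) (hb : 0 ≤ b) (h : 7 * a ^ 2 ≤ (g:ℝ) * b ^ 2) :
    a * (12 / Real.sqrt (g:ℝ) * (Real.sqrt (2 * Real.pi))⁻¹) ≤
    b * (12 / Real.sqrt ((7:ℕ):ℝ) * (Real.sqrt (2 * Real.pi))⁻¹) := by
  have h7 : (0:ℝ) < Real.sqrt ((7:ℕ):ℝ) := by
    rw [show ((7:ℕ):ℝ) = (7:ℝ) by norm_num]; positivity
  rcases Nat.eq_zero_or_pos g with hg | hg
  · subst hg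
    simp only [Nat.cast_zero, Real.sqrt_zero, div_zero, zero_mul, mul_zero]
    positivity
  have hgpos : (0:ℝ) < Real.sqrt g := by
    have : (0:ℝ) < (g:ℝ) := by exact_mod_cast hg
    positivity
  have hsq : Real.sqrt (7 * a ^ 2) ≤ Real.sqrt ((g:ℝ) * b ^ 2) := Real.sqrt_le_sqrt h
  rw [Real.sqrt_mul (by norm_num : (0:ℝ) ≤ 7), Real.sqrt_mul (Nat.cast_nonneg g),
    Real.sqrt_sq ha, Real.sqrt_sq hb] at hsq
  have h7' : Real.sqrt ((7:ℕ):ℝ) = Real.sqrt (7:ℝ) := by norm_num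
  have key2 : a / Real.sqrt g ≤ b / Real.sqrt ((7:ℕ):ℝ) := by
    rw [h7', div_le_div_iff₀ hgpos (h7' ▸ h7)]
    calc a * Real.sqrt 7 = Real.sqrt 7 * a := by ring
    _ ≤ Real.sqrt g * b := hsq
    _ = b * Real.sqrt g := by ring
  calc a * (12 / Real.sqrt (g:ℝ) * (Real.sqrt (2 * Real.pi))⁻¹)
      = (a / Real.sqrt g) * (12 * (Real.sqrt (2 * Real.pi))⁻¹) := by ring
    _ ≤ (b / Real.sqrt ((7:ℕ):ℝ)) * (12 * (Real.sqrt (2 * Real.pi))⁻¹) := by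
        apply mul_le_mul_of_nonneg_right key2; positivity
    _ = b * (12 / Real.sqrt ((7:ℕ):ℝ) * (Real.sqrt (2 * Real.pi))⁻¹) := by ring

lemma Pkm_of_lt (p : ℝ) (k : ℤ) (m : ℕ) (h : k < -1) : Pkm p k m = 1 := by
  unfold Pkm; rw [if_pos h]

lemma Pkm_of_ge (p : ℝ) (k : ℤ) (m : ℕ) (h : (m:ℤ) ≤ k) : Pkm p k m = 0 := by
  unfold Pkm; rw [if_neg (by omega), if_pos h]

lemma PV_m1_11 : Pkm (1/2) (-1) 11 = 2048 / 2 ^ 11 := by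
  norm_num [Pkm, Finset.sum_range_succ, Nat.choose_eq_factorial_div_factorial, Nat.factorial]

lemma PV_m1_12 : Pkm (1/2) (-1) 12 = 4096 / 2 ^ 12 := by
  norm_num [Pkm, Finset.sum_range_succ, Nat.choose_eq_factorial_div_factorial, Nat.factorial]

lemma PV_m1_13 : Pkm (1/2) (-1) 13 = 8192 / 2 ^ 13 := by
  norm_num [Pkm, Finset.sum_range_succ, Nat.choose_eq_factorial_div_factorial, Nat.factorial]

lemma PV_0_12 : Pkm (1/2) 0 12 = 4095 / 2 ^ 12 := by
  norm_num [Pkm, Finset.sum_range_succ, Nat.choose_eq_factorial_div_factorial, Nat.factorial]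

lemma PV_0_13 : Pkm (1/2) 0 13 = 8191 / 2 ^ 13 := by
  norm_num [Pkm, Finset.sum_range_succ, Nat.choose_eq_factorial_div_factorial, Nat.factorial]

lemma PV_0_14 : Pkm (1/2) 0 14 = 16383 / 2 ^ 14 := by
  norm_num [Pkm, Finset.sum_range_succ, Nat.choose_eq_factorial_div_factorial, Nat.factorial]

lemma PV_1_13 : Pkm (1/2) 1 13 = 8178 / 2 ^ 13 := by
  norm_num [Pkm, Finset.sum_range_succ, Nat.choose_eq_factorial_div_factorial, Nat.factorial]

lemma PV_1_14 : Pkm (1/2) 1 14 = 16369 / 2 ^ 14 := by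
  norm_num [Pkm, Finset.sum_range_succ, Nat.choose_eq_factorial_div_factorial, Nat.factorial]

lemma PV_1_15 : Pkm (1/2) 1 15 = 32752 / 2 ^ 15 := by
  norm_num [Pkm, Finset.sum_range_succ, Nat.choose_eq_factorial_div_factorial, Nat.factorial]

lemma PV_2_14 : Pkm (1/2) 2 14 = 16278 / 2 ^ 14 := by
  norm_num [Pkm, Finset.sum_range_succ, Nat.choose_eq_factorial_div_factorial, Nat.factorial]

lemma PV_2_15 : Pkm (1/2) 2 15 = 32647 / 2 ^ 15 := by
  norm_num [Pkm, Finset.sum_range_succ, Nat.choose_eq_factorial_div_factorial, Nat.factorial]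

lemma PV_2_16 : Pkm (1/2) 2 16 = 65399 / 2 ^ 16 := by
  norm_num [Pkm, Finset.sum_range_succ, Nat.choose_eq_factorial_div_factorial, Nat.factorial]

lemma PV_3_15 : Pkm (1/2) 3 15 = 32192 / 2 ^ 15 := by
  norm_num [Pkm, Finset.sum_range_succ, Nat.choose_eq_factorial_div_factorial, Nat.factorial]

lemma PV_3_16 : Pkm (1/2) 3 16 = 64839 / 2 ^ 16 := by
  norm_num [Pkm, Finset.sum_range_succ, Nat.choose_eq_factorial_div_factorial, Nat.factorial]

lemma PV_3_17 : Pkm (1/2) 3 17 = 130238 / 2 ^ 17 := by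
  norm_num [Pkm, Finset.sum_range_succ, Nat.choose_eq_factorial_div_factorial, Nat.factorial]

lemma PV_4_16 : Pkm (1/2) 4 16 = 63019 / 2 ^ 16 := by
  norm_num [Pkm, Finset.sum_range_succ, Nat.choose_eq_factorial_div_factorial, Nat.factorial]

lemma PV_4_17 : Pkm (1/2) 4 17 = 127858 / 2 ^ 17 := by
  norm_num [Pkm, Finset.sum_range_succ, Nat.choose_eq_factorial_div_factorial, Nat.factorial]

lemma PV_4_18 : Pkm (1/2) 4 18 = 258096 / 2 ^ 18 := by
  norm_num [Pkm, Finset.sum_range_succ, Nat.choose_eq_factorial_div_factorial, Nat.factorial]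

lemma PV_5_17 : Pkm (1/2) 5 17 = 121670 / 2 ^ 17 := by
  norm_num [Pkm, Finset.sum_range_succ, Nat.choose_eq_factorial_div_factorial, Nat.factorial]

lemma PV_5_18 : Pkm (1/2) 5 18 = 249528 / 2 ^ 18 := by
  norm_num [Pkm, Finset.sum_range_succ, Nat.choose_eq_factorial_div_factorial, Nat.factorial]

lemma PV_5_19 : Pkm (1/2) 5 19 = 507624 / 2 ^ 19 := by
  norm_num [Pkm, Finset.sum_range_succ, Nat.choose_eq_factorial_div_factorial, Nat.factorial]

lemma PV_6_18 : Pkm (1/2) 6 18 = 230964 / 2 ^ 18 := by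
  norm_num [Pkm, Finset.sum_range_succ, Nat.choose_eq_factorial_div_factorial, Nat.factorial]

lemma PV_6_19 : Pkm (1/2) 6 19 = 480492 / 2 ^ 19 := by
  norm_num [Pkm, Finset.sum_range_succ, Nat.choose_eq_factorial_div_factorial, Nat.factorial]

lemma PV_6_20 : Pkm (1/2) 6 20 = 988116 / 2 ^ 20 := by
  norm_num [Pkm, Finset.sum_range_succ, Nat.choose_eq_factorial_div_factorial, Nat.factorial]

lemma PV_7_19 : Pkm (1/2) 7 19 = 430104 / 2 ^ 19 := by
  norm_num [Pkm, Finset.sum_range_succ, Nat.choose_eq_factorial_div_factorial, Nat.factorial]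

lemma PV_7_20 : Pkm (1/2) 7 20 = 910596 / 2 ^ 20 := by
  norm_num [Pkm, Finset.sum_range_succ, Nat.choose_eq_factorial_div_factorial, Nat.factorial]

lemma PV_7_21 : Pkm (1/2) 7 21 = 1898712 / 2 ^ 21 := by
  norm_num [Pkm, Finset.sum_range_succ, Nat.choose_eq_factorial_div_factorial, Nat.factorial]

lemma PV_8_20 : Pkm (1/2) 8 20 = 784626 / 2 ^ 20 := by
  norm_num [Pkm, Finset.sum_range_succ, Nat.choose_eq_factorial_div_factorial, Nat.factorial]

lemma PV_8_21 : Pkm (1/2) 8 21 = 1695222 / 2 ^ 21 := by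
  norm_num [Pkm, Finset.sum_range_succ, Nat.choose_eq_factorial_div_factorial, Nat.factorial]

lemma PV_8_22 : Pkm (1/2) 8 22 = 3593934 / 2 ^ 22 := by
  norm_num [Pkm, Finset.sum_range_succ, Nat.choose_eq_factorial_div_factorial, Nat.factorial]

lemma PV_9_21 : Pkm (1/2) 9 21 = 1401292 / 2 ^ 21 := by
  norm_num [Pkm, Finset.sum_range_succ, Nat.choose_eq_factorial_div_factorial, Nat.factorial]

lemma PV_9_22 : Pkm (1/2) 9 22 = 3096514 / 2 ^ 22 := by
  norm_num [Pkm, Finset.sum_range_succ, Nat.choose_eq_factorial_div_factorial, Nat.factorial]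

lemma PV_9_23 : Pkm (1/2) 9 23 = 6690448 / 2 ^ 23 := by
  norm_num [Pkm, Finset.sum_range_succ, Nat.choose_eq_factorial_div_factorial, Nat.factorial]

lemma PV_10_22 : Pkm (1/2) 10 22 = 2449868 / 2 ^ 22 := by
  norm_num [Pkm, Finset.sum_range_succ, Nat.choose_eq_factorial_div_factorial, Nat.factorial]

lemma PV_10_23 : Pkm (1/2) 10 23 = 5546382 / 2 ^ 23 := by
  norm_num [Pkm, Finset.sum_range_succ, Nat.choose_eq_factorial_div_factorial, Nat.factorial]

lemma PV_10_24 : Pkm (1/2) 10 24 = 12236830 / 2 ^ 24 := by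
  norm_num [Pkm, Finset.sum_range_succ, Nat.choose_eq_factorial_div_factorial, Nat.factorial]

lemma PV_11_12 : Pkm (1/2) 11 12 = 1 / 2 ^ 12 := by
  norm_num [Pkm, Finset.sum_range_succ, Nat.choose_eq_factorial_div_factorial, Nat.factorial]

lemma PV_11_13 : Pkm (1/2) 11 13 = 14 / 2 ^ 13 := by
  norm_num [Pkm, Finset.sum_range_succ, Nat.choose_eq_factorial_div_factorial, Nat.factorial]

lemma PV_11_14 : Pkm (1/2) 11 14 = 106 / 2 ^ 14 := by
  norm_num [Pkm, Finset.sum_range_succ, Nat.choose_eq_factorial_div_factorial, Nat.factorial]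

lemma PV_11_15 : Pkm (1/2) 11 15 = 576 / 2 ^ 15 := by
  norm_num [Pkm, Finset.sum_range_succ, Nat.choose_eq_factorial_div_factorial, Nat.factorial]

lemma PV_11_16 : Pkm (1/2) 11 16 = 2517 / 2 ^ 16 := by
  norm_num [Pkm, Finset.sum_range_succ, Nat.choose_eq_factorial_div_factorial, Nat.factorial]

lemma PV_11_17 : Pkm (1/2) 11 17 = 9402 / 2 ^ 17 := by
  norm_num [Pkm, Finset.sum_range_succ, Nat.choose_eq_factorial_div_factorial, Nat.factorial]

lemma PV_11_18 : Pkm (1/2) 11 18 = 31180 / 2 ^ 18 := by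
  norm_num [Pkm, Finset.sum_range_succ, Nat.choose_eq_factorial_div_factorial, Nat.factorial]

lemma PV_11_19 : Pkm (1/2) 11 19 = 94184 / 2 ^ 19 := by
  norm_num [Pkm, Finset.sum_range_succ, Nat.choose_eq_factorial_div_factorial, Nat.factorial]

lemma PV_11_20 : Pkm (1/2) 11 20 = 263950 / 2 ^ 20 := by
  norm_num [Pkm, Finset.sum_range_succ, Nat.choose_eq_factorial_div_factorial, Nat.factorial]

lemma PV_11_21 : Pkm (1/2) 11 21 = 695860 / 2 ^ 21 := by
  norm_num [Pkm, Finset.sum_range_succ, Nat.choose_eq_factorial_div_factorial, Nat.factorial]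

lemma PV_11_22 : Pkm (1/2) 11 22 = 1744436 / 2 ^ 22 := by
  norm_num [Pkm, Finset.sum_range_succ, Nat.choose_eq_factorial_div_factorial, Nat.factorial]

lemma PV_11_23 : Pkm (1/2) 11 23 = 4194304 / 2 ^ 23 := by
  norm_num [Pkm, Finset.sum_range_succ, Nat.choose_eq_factorial_div_factorial, Nat.factorial]

lemma PV_11_24 : Pkm (1/2) 11 24 = 9740686 / 2 ^ 24 := by
  norm_num [Pkm, Finset.sum_range_succ, Nat.choose_eq_factorial_div_factorial, Nat.factorial]

lemma PV_12_13 : Pkm (1/2) 12 13 = 1 / 2 ^ 13 := by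
  norm_num [Pkm, Finset.sum_range_succ, Nat.choose_eq_factorial_div_factorial, Nat.factorial]

lemma PV_12_14 : Pkm (1/2) 12 14 = 15 / 2 ^ 14 := by
  norm_num [Pkm, Finset.sum_range_succ, Nat.choose_eq_factorial_div_factorial, Nat.factorial]

lemma PV_12_15 : Pkm (1/2) 12 15 = 121 / 2 ^ 15 := by
  norm_num [Pkm, Finset.sum_range_succ, Nat.choose_eq_factorial_div_factorial, Nat.factorial]

lemma PV_12_16 : Pkm (1/2) 12 16 = 697 / 2 ^ 16 := by
  norm_num [Pkm, Finset.sum_range_succ, Nat.choose_eq_factorial_div_factorial, Nat.factorial]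

lemma PV_12_17 : Pkm (1/2) 12 17 = 3214 / 2 ^ 17 := by
  norm_num [Pkm, Finset.sum_range_succ, Nat.choose_eq_factorial_div_factorial, Nat.factorial]

lemma PV_12_18 : Pkm (1/2) 12 18 = 12616 / 2 ^ 18 := by
  norm_num [Pkm, Finset.sum_range_succ, Nat.choose_eq_factorial_div_factorial, Nat.factorial]

lemma PV_12_19 : Pkm (1/2) 12 19 = 43796 / 2 ^ 19 := by
  norm_num [Pkm, Finset.sum_range_succ, Nat.choose_eq_factorial_div_factorial, Nat.factorial]

lemma PV_12_20 : Pkm (1/2) 12 20 = 137980 / 2 ^ 20 := by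
  norm_num [Pkm, Finset.sum_range_succ, Nat.choose_eq_factorial_div_factorial, Nat.factorial]

lemma PV_12_21 : Pkm (1/2) 12 21 = 401930 / 2 ^ 21 := by
  norm_num [Pkm, Finset.sum_range_succ, Nat.choose_eq_factorial_div_factorial, Nat.factorial]

lemma PV_12_22 : Pkm (1/2) 12 22 = 1097790 / 2 ^ 22 := by
  norm_num [Pkm, Finset.sum_range_succ, Nat.choose_eq_factorial_div_factorial, Nat.factorial]

lemma PV_12_23 : Pkm (1/2) 12 23 = 2842226 / 2 ^ 23 := by
  norm_num [Pkm, Finset.sum_range_succ, Nat.choose_eq_factorial_div_factorial, Nat.factorial]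

lemma PV_12_24 : Pkm (1/2) 12 24 = 7036530 / 2 ^ 24 := by
  norm_num [Pkm, Finset.sum_range_succ, Nat.choose_eq_factorial_div_factorial, Nat.factorial]

lemma PV_13_14 : Pkm (1/2) 13 14 = 1 / 2 ^ 14 := by
  norm_num [Pkm, Finset.sum_range_succ, Nat.choose_eq_factorial_div_factorial, Nat.factorial]

lemma PV_13_15 : Pkm (1/2) 13 15 = 16 / 2 ^ 15 := by
  norm_num [Pkm, Finset.sum_range_succ, Nat.choose_eq_factorial_div_factorial, Nat.factorial]

lemma PV_13_16 : Pkm (1/2) 13 16 = 137 / 2 ^ 16 := by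
  norm_num [Pkm, Finset.sum_range_succ, Nat.choose_eq_factorial_div_factorial, Nat.factorial]

lemma PV_13_17 : Pkm (1/2) 13 17 = 834 / 2 ^ 17 := by
  norm_num [Pkm, Finset.sum_range_succ, Nat.choose_eq_factorial_div_factorial, Nat.factorial]

lemma PV_13_18 : Pkm (1/2) 13 18 = 4048 / 2 ^ 18 := by
  norm_num [Pkm, Finset.sum_range_succ, Nat.choose_eq_factorial_div_factorial, Nat.factorial]

lemma PV_13_19 : Pkm (1/2) 13 19 = 16664 / 2 ^ 19 := by
  norm_num [Pkm, Finset.sum_range_succ, Nat.choose_eq_factorial_div_factorial, Nat.factorial]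

lemma PV_13_20 : Pkm (1/2) 13 20 = 60460 / 2 ^ 20 := by
  norm_num [Pkm, Finset.sum_range_succ, Nat.choose_eq_factorial_div_factorial, Nat.factorial]

lemma PV_13_21 : Pkm (1/2) 13 21 = 198440 / 2 ^ 21 := by
  norm_num [Pkm, Finset.sum_range_succ, Nat.choose_eq_factorial_div_factorial, Nat.factorial]

lemma PV_13_22 : Pkm (1/2) 13 22 = 600370 / 2 ^ 22 := by
  norm_num [Pkm, Finset.sum_range_succ, Nat.choose_eq_factorial_div_factorial, Nat.factorial]

lemma PV_13_23 : Pkm (1/2) 13 23 = 1698160 / 2 ^ 23 := by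
  norm_num [Pkm, Finset.sum_range_succ, Nat.choose_eq_factorial_div_factorial, Nat.factorial]

lemma PV_13_24 : Pkm (1/2) 13 24 = 4540386 / 2 ^ 24 := by
  norm_num [Pkm, Finset.sum_range_succ, Nat.choose_eq_factorial_div_factorial, Nat.factorial]

end AuxProofs


set_option maxHeartbeats 4000000 in
/-- With `n = 25`, `μ = 0`, `σ = 12`, for each integer threshold
`t ∈ {11, 12, 13}`, the group size optimal for group members is `7`: for every group size
`1 ≤ g ≤ 25`, `E_G(g, t) ≤ E_G(7, t)`. -/
theorem optimal_group_size_seven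
    (t : ℤ) (ht : t = 11 ∨ t = 12 ∨ t = 13)
    (g : ℕ) (hg1 : 1 ≤ g) (hg2 : g ≤ 25) :
    EG25 g t ≤ EG25 7 t := by
  rcases ht with rfl | rfl | rfl <;> interval_cases g <;>
    first
    | exact le_refl _
    | ((rw [EG25_eq, EG25_eq]; refine key _ _ _ ?_ ?_ ?_) <;>
        norm_num [Pkm_of_lt, Pkm_of_ge, PV_m1_11, PV_m1_12, PV_m1_13, PV_0_12, PV_0_13, PV_0_14, PV_1_13, PV_1_14, PV_1_15, PV_2_14, PV_2_15, PV_2_16, PV_3_15, PV_3_16, PV_3_17, PV_4_16, PV_4_17, PV_4_18, PV_5_17, PV_5_18, PV_5_19, PV_6_18, PV_6_19, PV_6_20, PV_7_19, PV_7_20, PV_7_21, PV_8_20, PV_8_21, PV_8_22, PV_9_21, PV_9_22, PV_9_23, PV_10_22, PV_10_23, PV_10_24, PV_11_12, PV_11_13, PV_11_14, PV_11_15, PV_11_16, PV_11_17, PV_11_18, PV_11_19, PV_11_20, PV_11_21, PV_11_22, PV_11_23, PV_11_24, PV_12_13, PV_12_14, PV_12_15, PV_12_16, PV_12_17, PV_12_18,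 PV_12_19, PV_12_20, PV_12_21, PV_12_22, PV_12_23, PV_12_24, PV_13_14, PV_13_15, PV_13_16, PV_13_17, PV_13_18, PV_13_19, PV_13_20, PV_13_21, PV_13_22, PV_13_23, PV_13_24])
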